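/- Let G be a biconnected loopless 4-regular multigraph and u, v a separation pair of G such that u and v each have degree 3 into a component A (i.e., deg_A(u) = deg_A(v) = 3). Then the graph A' obtained from the induced subgraph on A ∪ {u, v} by adding one edge between u and v is a biconnected 4-regular multigraph, and the graph B' obtained from the rest of G by deleting u and v and joining their unique neighbors outside A by a new edge is also a biconnected loopless 4-regular multigraph. -/

import Mathlib

/-- The edge `e` joins the vertices `x` and `y` (in either orientation). -/
def MGBetween {V E : Type} (f s : E → V) (e : E) (x y : V) : Prop :=
  (f e = x ∧ s e = y) ∨ (f e = y ∧ s e = x)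

/-- The edge `e` is incident to the vertex `v`. -/
def MGInc {V E : Type} (f s : E → V) (v : V) (e : E) : Prop := f e = v ∨ s e = v

/-- Two vertices are adjacent if some edge joins them. -/
def MGAdj {V E : Type} (f s : E → V) (x y : V) : Prop := ∃ e, MGBetween f s e x y

/-- The multigraph has no loops. -/
def MGLoopless {V E : Type} (f s : E → V) : Prop := ∀ e, f e ≠ s e

/-- Every vertex has degree exactly `4`. -/
def MGFourRegular {V E : Type} (f s : E → V) : Prop :=
  ∀ v : V, Nat.card {e : E // MGInc f s v e} = 4

/-- The multigraph is connected. -/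
def MGConnected {V E : Type} (f s : E → V) : Prop :=
  Nonempty V ∧ ∀ u v : V, Relation.ReflTransGen (MGAdj f s) u v

/-- Reachability by walks avoiding the vertex `w`. -/
def MGReachAvoiding {V E : Type} (f s : E → V) (w : V) : V → V → Prop :=
  Relation.ReflTransGen (fun x y => x ≠ w ∧ y ≠ w ∧ MGAdj f s x y)

/-- The multigraph is biconnected: connected and without cutvertices. -/
def MGBiconnected {V E : Type} (f s : E → V) : Prop :=
  MGConnected f s ∧ ∀ w u v : V, u ≠ w → v ≠ w → MGReachAvoiding f s w u v

/-- Reachability by walks avoiding both vertices `u` and `v`. -/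
def MGReachAvoiding2 {V E : Type} (f s : E → V) (u v : V) : V → V → Prop :=
  Relation.ReflTransGen (fun x y => x ≠ u ∧ x ≠ v ∧ y ≠ u ∧ y ≠ v ∧ MGAdj f s x y)


/-! `A'` and `B'` both arise from `G` in the same way: take the subgraph induced on a vertex set
`P` whose only vertices with neighbours outside `P` are two vertices `p ≠ q`, each with exactly one
edge leaving `P`, and add an edge `pq`. The new edge replaces the lost edge at `p` and at `q`, so
degrees are preserved. A walk of `G` avoiding a vertex `w ∈ P` projects to `P` by collapsing every
excursion outside `P` to whichever of `p, q` differs from `w`; an excursion leaving at one of them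
and returning at the other is replaced by the new edge.

For `A'` the set is `A ∪ {u, v}` with `p, q = u, v`, and for `B'` its complement with
`p, q = x, y`. The only extra point is `x ≠ y`: otherwise every neighbour of `x` besides `u` and
`v` would be separated from `u` by removing `x`, so all four edges at `x` would go to `u` or `v`,
whereas each of them has only one edge leaving `A`. -/

theorem Nat.card_and_add_card_not_and {α : Type*} [Finite α] (p q : α → Prop) :
    Nat.card {a // q a ∧ p a} + Nat.card {a // ¬q a ∧ p a} = Nat.card {a // p a} := by
  classical
  rw [← Nat.card_congr (Equiv.sumCompl fun a : {a // p a} => q a), Nat.card_sum]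
  congr 1 <;> exact Nat.card_congr ((Equiv.subtypeEquivRight fun _ => and_comm).trans
    (Equiv.subtypeSubtypeEquivSubtypeInter _ _).symm)

theorem Nat.card_subtype_le_two {α : Type*} [Finite α] {p : α → Prop} {a₁ a₂ : α}
    (h : ∀ a, p a → a = a₁ ∨ a = a₂) : Nat.card {a // p a} ≤ 2 :=
  calc Nat.card {a // p a}
      ≤ ({a₁, a₂} : Set α).ncard := by
        rw [← Nat.card_coe_set_eq]
        exact Nat.card_mono (Set.toFinite _) h
    _ ≤ 2 := (Set.ncard_insert_le _ _).trans (by rw [Set.ncard_singleton])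

section Multigraph

variable {V E : Type} {f s : E → V}

theorem MGBetween.symm {e : E} {a b : V} (h : MGBetween f s e a b) : MGBetween f s e b a :=
  Or.symm h

theorem MGBetween.inc {e : E} {a b : V} (h : MGBetween f s e a b) : MGInc f s a e := by
  rcases h with ⟨h, -⟩ | ⟨-, h⟩
  exacts [Or.inl h, Or.inr h]

theorem MGBetween.right_unique {e : E} {a b b' : V} (h : MGBetween f s e a b)
    (h' : MGBetween f s e a b') : b = b' := by
  unfold MGBetween at h h'
  grind

theorem MGBetween.ends {R : V → Prop} {e : E} {a b : V} (h : MGBetween f s e a b) (ha : R a)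
    (hb : R b) : R (f e) ∧ R (s e) := by
  rcases h with ⟨rfl, rfl⟩ | ⟨rfl, rfl⟩
  exacts [⟨ha, hb⟩, ⟨hb, ha⟩]

theorem MGBetween.right_of_ends {R : V → Prop} {e : E} {a b : V} (h : MGBetween f s e a b)
    (hR : R (f e) ∧ R (s e)) : R b := by
  rcases h with ⟨rfl, rfl⟩ | ⟨rfl, rfl⟩
  exacts [hR.2, hR.1]

theorem MGInc.exists_between {e : E} {a : V} (h : MGInc f s a e) : ∃ b, MGBetween f s e a b := by
  rcases h with h | h
  exacts [⟨s e, Or.inl ⟨h, rfl⟩⟩, ⟨f e, Or.inr ⟨rfl, h⟩⟩]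

theorem MGAdj.symm {a b : V} (h : MGAdj f s a b) : MGAdj f s b a :=
  let ⟨e, he⟩ := h
  ⟨e, he.symm⟩

theorem MGLoopless.ne_of_between (hl : MGLoopless f s) {e : E} {a b : V}
    (h : MGBetween f s e a b) : a ≠ b := by
  rintro rfl
  rcases h with ⟨h, h'⟩ | ⟨h, h'⟩ <;> exact hl e (h.trans h'.symm)

theorem MGBetween.eq_of_card_inc_eq_succ [Finite E] {A : Set V} {w : V} {n : ℕ}
    (hdeg : Nat.card {e // MGInc f s w e} = n + 1)
    (hdegA : Nat.card {e // ∃ a ∈ A, MGBetween f s e w a} = n)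
    {e e₀ : E} {o o₀ : V} (h : MGBetween f s e w o) (ho : o ∉ A)
    (h₀ : MGBetween f s e₀ w o₀) (ho₀ : o₀ ∉ A) : e = e₀ := by
  have hinto : Nat.card {e // (∃ a ∈ A, MGBetween f s e w a) ∧ MGInc f s w e} = n := by
    rw [← hdegA]
    exact Nat.card_congr (Equiv.subtypeEquivRight fun e =>
      and_iff_left_of_imp fun ⟨_, _, h⟩ => h.inc)
  have hexit : Nat.card {e // ¬(∃ a ∈ A, MGBetween f s e w a) ∧ MGInc f s w e} = 1 := by
    have := Nat.card_and_add_card_not_and (MGInc f s w) (fun e => ∃ a ∈ A, MGBetween f s e w a)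
    omega
  have hsub := (Nat.card_eq_one_iff_unique.mp hexit).1
  have not_into {e : E} {o : V} (h : MGBetween f s e w o) (ho : o ∉ A) :
      ¬∃ a ∈ A, MGBetween f s e w a := fun ⟨_, ha, h'⟩ => ho (h.right_unique h' ▸ ha)
  exact congrArg Subtype.val
    (hsub.elim ⟨e, not_into h ho, h.inc⟩ ⟨e₀, not_into h₀ ho₀, h₀.inc⟩)

theorem MGBiconnected.mem_of_between_of_closed (hG : MGBiconnected f s) (hl : MGLoopless f s)
    {P : V → Prop} {a x o : V} {e : E} (ha : P a) (hx : ¬P x)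
    (hclosed : ∀ e b c, P b → c ≠ x → MGBetween f s e b c → P c)
    (h : MGBetween f s e x o) : P o := by
  have hreach : MGReachAvoiding f s x a o :=
    hG.2 x a o (fun h => hx (h ▸ ha)) (hl.ne_of_between h).symm
  clear h
  induction hreach with
  | refl => exact ha
  | tail _ hbc ih =>
    obtain ⟨-, hc, e', he'⟩ := hbc
    exact hclosed e' _ _ ih hc he'

end Multigraph

structure IsInducedAddEdge {V E : Type} (f s : E → V) (P : V → Prop) (p q : V)
    (f' s' : ({e // P (f e) ∧ P (s e)} ⊕ Unit) → {w // P w}) : Prop where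
  inl : ∀ e, (f' (.inl e) : V) = f e.val ∧ (s' (.inl e) : V) = s e.val
  inr : (f' (.inr ()) : V) = p ∧ (s' (.inr ()) : V) = q

namespace IsInducedAddEdge

variable {V E : Type} {f s : E → V} {P : V → Prop} {p q : V}
  {f' s' : ({e // P (f e) ∧ P (s e)} ⊕ Unit) → {w // P w}}

theorem inc_inl_iff (hH : IsInducedAddEdge f s P p q f' s') {w : {w // P w}}
    {e : {e // P (f e) ∧ P (s e)}} : MGInc f' s' w (.inl e) ↔ MGInc f s w e.val := by
  simp only [MGInc, Subtype.ext_iff, hH.inl e]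

theorem inc_inr_iff (hH : IsInducedAddEdge f s P p q f' s') {w : {w // P w}} :
    MGInc f' s' w (.inr ()) ↔ (w : V) = p ∨ (w : V) = q := by
  simp only [MGInc, Subtype.ext_iff, hH.inr, eq_comm]

theorem adj_of_between (hH : IsInducedAddEdge f s P p q f' s') {e : E} {a b : V} (ha : P a)
    (hb : P b) (h : MGBetween f s e a b) : MGAdj f' s' ⟨a, ha⟩ ⟨b, hb⟩ := by
  refine ⟨.inl ⟨e, h.ends ha hb⟩, ?_⟩
  simp only [MGBetween, Subtype.ext_iff, hH.inl]
  exact h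

theorem adj_of_ne (hH : IsInducedAddEdge f s P p q f' s') {c d : {w // P w}}
    (hc : (c : V) = p ∨ (c : V) = q) (hd : (d : V) = p ∨ (d : V) = q) (hcd : c ≠ d) :
    MGAdj f' s' c d := by
  refine ⟨.inr (), ?_⟩
  simp only [MGBetween, Subtype.ext_iff, hH.inr]
  rcases hc with hc | hc <;> rcases hd with hd | hd
  · exact absurd (Subtype.ext (hc.trans hd.symm)) hcd
  · exact .inl ⟨hc.symm, hd.symm⟩
  · exact .inr ⟨hd.symm, hc.symm⟩
  · exact absurd (Subtype.ext (hc.trans hd.symm)) hcd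

theorem loopless (hH : IsInducedAddEdge f s P p q f' s') (hG : MGLoopless f s) (hpq : p ≠ q) :
    MGLoopless f' s' := by
  rintro (e | ⟨⟩) h
  · exact hG e.val (by rw [← (hH.inl e).1, ← (hH.inl e).2, h])
  · exact hpq (by rw [← hH.inr.1, ← hH.inr.2, h])

theorem card_inc_eq_card_inl_add [Finite E] (hH : IsInducedAddEdge f s P p q f' s')
    (w : {w // P w}) :
    Nat.card {e' // MGInc f' s' w e'} =
      Nat.card {e // (P (f e) ∧ P (s e)) ∧ MGInc f s w e} +
        Nat.card {t : Unit // MGInc f' s' w (.inr t)} := by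
  rw [Nat.card_congr Equiv.subtypeSum, Nat.card_sum]
  congr 1
  exact Nat.card_congr ((Equiv.subtypeEquivRight fun _ => hH.inc_inl_iff).trans
    (Equiv.subtypeSubtypeEquivSubtypeInter _ _))

theorem card_inc_eq [Finite E] (hH : IsInducedAddEdge f s P p q f' s')
    (hatt : ∀ e a b, P a → ¬P b → MGBetween f s e a b → a = p ∨ a = q)
    (hp : ∃! e, ∃ o, ¬P o ∧ MGBetween f s e p o) (hq : ∃! e, ∃ o, ¬P o ∧ MGBetween f s e q o)
    (w : {w // P w}) : Nat.card {e' // MGInc f' s' w e'} = Nat.card {e // MGInc f s w e} := by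
  rw [hH.card_inc_eq_card_inl_add, ← Nat.card_and_add_card_not_and (MGInc f s w)
    (fun e => P (f e) ∧ P (s e))]
  congr 1
  have lost_iff : ∀ e, (¬(P (f e) ∧ P (s e)) ∧ MGInc f s w e) ↔
      ∃ o, ¬P o ∧ MGBetween f s e w o := by
    refine fun e => ⟨fun ⟨hQ, hw⟩ => ?_, fun ⟨o, ho, h⟩ => ⟨fun hQ => ho (h.right_of_ends hQ), h.inc⟩⟩
    obtain ⟨o, h⟩ := hw.exists_between
    exact ⟨o, fun ho => hQ (h.ends w.2 ho), h⟩
  have exit_at : ∀ e, (¬(P (f e) ∧ P (s e)) ∧ MGInc f s w e) →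
      ((w : V) = p ∨ (w : V) = q) := fun e he => by
    obtain ⟨o, ho, h⟩ := (lost_iff e).1 he
    exact hatt e w o w.2 ho h
  have : Subsingleton {e // ¬(P (f e) ∧ P (s e)) ∧ MGInc f s w e} := by
    refine ⟨fun ⟨e₁, h₁⟩ ⟨e₂, h₂⟩ => Subtype.ext ?_⟩
    rw [lost_iff] at h₁ h₂
    rcases exit_at e₁ ((lost_iff e₁).2 h₁) with hw | hw
    · exact hp.unique (hw ▸ h₁) (hw ▸ h₂)
    · exact hq.unique (hw ▸ h₁) (hw ▸ h₂)
  have lost_of_new (ht : MGInc f' s' w (.inr ())) :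
      Nonempty {e // ¬(P (f e) ∧ P (s e)) ∧ MGInc f s w e} := by
    rcases hH.inc_inr_iff.1 ht with hw | hw
    · obtain ⟨e, he, -⟩ := hp
      exact ⟨e, (lost_iff e).2 (hw ▸ he)⟩
    · obtain ⟨e, he, -⟩ := hq
      exact ⟨e, (lost_iff e).2 (hw ▸ he)⟩
  exact Nat.card_congr (equivOfSubsingletonOfSubsingleton (fun t => (lost_of_new t.2).some)
    fun e => ⟨(), hH.inc_inr_iff.2 (exit_at e.1 e.2)⟩)

theorem fourRegular [Finite E] (hH : IsInducedAddEdge f s P p q f' s') (hG : MGFourRegular f s)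
    (hatt : ∀ e a b, P a → ¬P b → MGBetween f s e a b → a = p ∨ a = q)
    (hp : ∃! e, ∃ o, ¬P o ∧ MGBetween f s e p o) (hq : ∃! e, ∃ o, ¬P o ∧ MGBetween f s e q o) :
    MGFourRegular f' s' :=
  fun w => (hH.card_inc_eq hatt hp hq w).trans (hG w)

theorem reflTransGen (hH : IsInducedAddEdge f s P p q f' s')
    (hatt : ∀ e a b, P a → ¬P b → MGBetween f s e a b → a = p ∨ a = q) (ok : V → Prop)
    (z : {w // P w}) (hz : (z : V) = p ∨ (z : V) = q) (hzok : ok z) {a b : V} (ha : P a)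
    (hb : P b) (hab : Relation.ReflTransGen (fun c d => ok c ∧ ok d ∧ MGAdj f s c d) a b) :
    Relation.ReflTransGen (fun c d : {w // P w} => ok c ∧ ok d ∧ MGAdj f' s' c d)
      ⟨a, ha⟩ ⟨b, hb⟩ := by
  classical
  have exit {e : E} {c d : V} (hc : P c) (hd : ¬P d) (h : MGBetween f s e c d) :
      ⟨c, hc⟩ = z ∨ MGAdj f' s' ⟨c, hc⟩ z := by
    by_cases hcz : ⟨c, hc⟩ = z
    · exact .inl hcz
    · exact .inr (hH.adj_of_ne (hatt e c d hc hd h) hz hcz)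
  let π : V → {w // P w} := fun c => if hc : P c then ⟨c, hc⟩ else z
  have step : ∀ c d, ok c ∧ ok d ∧ MGAdj f s c d →
      Relation.ReflTransGen (fun c d : {w // P w} => ok c ∧ ok d ∧ MGAdj f' s' c d)
        (π c) (π d) := by
    rintro c d ⟨hc, hd, e, h⟩
    by_cases hcP : P c <;> by_cases hdP : P d <;> simp only [π, hcP, hdP, dite_true, dite_false]
    · exact .single ⟨hc, hd, hH.adj_of_between hcP hdP h⟩
    · rcases exit hcP hdP h with heq | hadj
      · rw [heq]
      · exact .single ⟨hc, hzok, hadj⟩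
    · rcases exit hdP hcP h.symm with heq | hadj
      · rw [heq]
      · exact .single ⟨hzok, hd, hadj.symm⟩
    · exact .refl
  simpa [Function.onFun, π, ha, hb] using Relation.ReflTransGen.lift' π step _ _ hab

theorem biconnected (hH : IsInducedAddEdge f s P p q f' s') (hG : MGBiconnected f s)
    (hatt : ∀ e a b, P a → ¬P b → MGBetween f s e a b → a = p ∨ a = q) (hp : P p) (hq : P q)
    (hpq : p ≠ q) : MGBiconnected f' s' := by
  refine ⟨⟨⟨⟨p, hp⟩⟩, fun c d => ?_⟩, fun w c d hc hd => ?_⟩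
  · have hGcd : Relation.ReflTransGen (fun a b => True ∧ True ∧ MGAdj f s a b) c d :=
      Relation.ReflTransGen.mono (fun _ _ h => ⟨trivial, trivial, h⟩) _ _ (hG.1.2 c d)
    exact Relation.ReflTransGen.mono (fun _ _ h => h.2.2) _ _
      (hH.reflTransGen hatt (fun _ => True) ⟨p, hp⟩ (.inl rfl) trivial c.2 d.2 hGcd)
  · obtain ⟨z, hz, hzw⟩ : ∃ z : {w // P w}, ((z : V) = p ∨ (z : V) = q) ∧ (z : V) ≠ w := by
      by_cases hw : (w : V) = p
      · exact ⟨⟨q, hq⟩, .inr rfl, fun h => hpq (hw ▸ h).symm⟩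
      · exact ⟨⟨p, hp⟩, .inl rfl, fun h => hw h.symm⟩
    have hGcd := hG.2 w c d (fun h => hc (Subtype.ext h)) (fun h => hd (Subtype.ext h))
    exact Relation.ReflTransGen.mono
      (fun _ _ h => ⟨fun h' => h.1 (congrArg _ h'), fun h' => h.2.1 (congrArg _ h'), h.2.2⟩) _ _
      (hH.reflTransGen hatt (· ≠ (w : V)) z hz hzw c.2 d.2 hGcd)

theorem loopless_fourRegular_biconnected [Finite E] (hH : IsInducedAddEdge f s P p q f' s')
    (hl : MGLoopless f s) (hreg : MGFourRegular f s) (hG : MGBiconnected f s)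
    (hatt : ∀ e a b, P a → ¬P b → MGBetween f s e a b → a = p ∨ a = q) (hp : P p) (hq : P q)
    (hpq : p ≠ q) (hp1 : ∃! e, ∃ o, ¬P o ∧ MGBetween f s e p o)
    (hq1 : ∃! e, ∃ o, ¬P o ∧ MGBetween f s e q o) :
    MGLoopless f' s' ∧ MGFourRegular f' s' ∧ MGBiconnected f' s' :=
  ⟨hH.loopless hl hpq, hH.fourRegular hreg hatt hp1 hq1, hH.biconnected hG hatt hp hq hpq⟩

end IsInducedAddEdge

section SeparationPair

variable {V E : Type} {f s : E → V} {A : Set V} {u v x y : V} {eux evy : E}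

theorem mem_or_eq_of_between
    (hnoedge : ∀ e : E, ¬(f e ∈ A ∧ s e ∉ A ∧ s e ≠ u ∧ s e ≠ v) ∧
      ¬(s e ∈ A ∧ f e ∉ A ∧ f e ≠ u ∧ f e ≠ v))
    {e : E} {a o : V} (ha : a ∈ A) (h : MGBetween f s e a o) : o ∈ A ∨ o = u ∨ o = v := by
  by_contra! ho
  rcases h with ⟨rfl, rfl⟩ | ⟨rfl, rfl⟩
  exacts [(hnoedge e).1 ⟨ha, ho⟩, (hnoedge e).2 ⟨ha, ho⟩]

theorem crossing_edge_cases
    (hAedge : ∀ e a o, a ∈ A → MGBetween f s e a o → o ∈ A ∨ o = u ∨ o = v)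
    (hux : ∀ e o, MGBetween f s e u o → o ∉ A → e = eux)
    (hvy : ∀ e o, MGBetween f s e v o → o ∉ A → e = evy)
    (heux : MGBetween f s eux u x) (hevy : MGBetween f s evy v y) ⦃e : E⦄ ⦃a b : V⦄
    (ha : a ∉ A ∧ a ≠ u ∧ a ≠ v) (hb : ¬(b ∉ A ∧ b ≠ u ∧ b ≠ v)) (h : MGBetween f s e a b) :
    (e = eux ∧ a = x) ∨ (e = evy ∧ a = y) := by
  have hb' : b ∈ A ∨ b = u ∨ b = v := by tauto
  rcases hb' with hbA | rfl | rfl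
  · exact absurd (hAedge e b a hbA h.symm) (by tauto)
  · obtain rfl := hux e a h.symm ha.1
    exact .inl ⟨rfl, h.symm.right_unique heux⟩
  · obtain rfl := hvy e a h.symm ha.1
    exact .inr ⟨rfl, h.symm.right_unique hevy⟩

theorem ne_of_separationPair [Finite E] (hl : MGLoopless f s) (hG : MGBiconnected f s)
    (hdeg : Nat.card {e // MGInc f s x e} = 4)
    (hAedge : ∀ e a o, a ∈ A → MGBetween f s e a o → o ∈ A ∨ o = u ∨ o = v)
    (hux : ∀ e o, MGBetween f s e u o → o ∉ A → e = eux)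
    (hvy : ∀ e o, MGBetween f s e v o → o ∉ A → e = evy)
    (heux : MGBetween f s eux u x) (hevy : MGBetween f s evy v y) (hx : x ∉ A ∧ x ≠ u ∧ x ≠ v) :
    x ≠ y := by
  rintro rfl
  have hclosed : ∀ e a b, (a ∈ A ∨ a = u ∨ a = v) → b ≠ x → MGBetween f s e a b →
      b ∈ A ∨ b = u ∨ b = v := by
    rintro e a b (ha | rfl | rfl) hbx h
    · exact hAedge e a b ha h
    · by_contra hb
      exact hbx (h.right_unique (hux e b h (by tauto) ▸ heux))
    · by_contra hb
      exact hbx (h.right_unique (hvy e b h (by tauto) ▸ hevy))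
  have hinc : ∀ e, MGInc f s x e → e = eux ∨ e = evy := by
    intro e he
    obtain ⟨o, h⟩ := he.exists_between
    rcases hG.mem_of_between_of_closed hl (.inr (.inl rfl)) (by tauto) hclosed h with
      hoA | rfl | rfl
    · exact absurd (hAedge e o x hoA h.symm) (by tauto)
    · exact .inl (hux e x h.symm hx.1)
    · exact .inr (hvy e x h.symm hx.1)
  have := Nat.card_subtype_le_two hinc
  omega

end SeparationPair

theorem stmt_12_general {V E : Type} [Finite E] (f s : E → V)
    (hloopless : MGLoopless f s) (hreg : MGFourRegular f s) (hbi : MGBiconnected f s)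
    (u v : V) (huv : u ≠ v) (A : Set V)
    (hnoedge : ∀ e : E, ¬ (f e ∈ A ∧ s e ∉ A ∧ s e ≠ u ∧ s e ≠ v) ∧
      ¬ (s e ∈ A ∧ f e ∉ A ∧ f e ≠ u ∧ f e ≠ v))
    -- `u` and `v` each send exactly three edges into `A`:
    (hdegu : Nat.card {e : E // ∃ a ∈ A, MGBetween f s e u a} = 3)
    (hdegv : Nat.card {e : E // ∃ a ∈ A, MGBetween f s e v a} = 3)
    -- `x` and `y` are the respective fourth neighbors of `u` and `v`, outside `A ∪ {u, v}`:
    (x y : V) (hx : x ≠ u ∧ x ≠ v ∧ x ∉ A ∧ ∃ e, MGBetween f s e u x)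
    (hy : y ≠ u ∧ y ≠ v ∧ y ∉ A ∧ ∃ e, MGBetween f s e v y)
    -- the multigraph `A'`:
    (fA sA : ({e : E // (f e ∈ A ∨ f e = u ∨ f e = v) ∧ (s e ∈ A ∨ s e = u ∨ s e = v)} ⊕ Unit) →
      {w : V // w ∈ A ∨ w = u ∨ w = v})
    (hfA : ∀ e, (fA (Sum.inl e) : V) = f e.val ∧ (sA (Sum.inl e) : V) = s e.val)
    (hnewA : (fA (Sum.inr ()) : V) = u ∧ (sA (Sum.inr ()) : V) = v)
    -- the multigraph `B'`:
    (fB sB : ({e : E // (f e ∉ A ∧ f e ≠ u ∧ f e ≠ v) ∧ (s e ∉ A ∧ s e ≠ u ∧ s e ≠ v)} ⊕ Unit) →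
      {w : V // w ∉ A ∧ w ≠ u ∧ w ≠ v})
    (hfB : ∀ e, (fB (Sum.inl e) : V) = f e.val ∧ (sB (Sum.inl e) : V) = s e.val)
    (hnewB : (fB (Sum.inr ()) : V) = x ∧ (sB (Sum.inr ()) : V) = y) :
    (MGLoopless fA sA ∧ MGFourRegular fA sA ∧ MGBiconnected fA sA) ∧
    (MGLoopless fB sB ∧ MGFourRegular fB sB ∧ MGBiconnected fB sB) := by
  obtain ⟨hxu, hxv, hxA, eux, heux⟩ := hx
  obtain ⟨hyu, hyv, hyA, evy, hevy⟩ := hy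
  have hAedge : ∀ e a o, a ∈ A → MGBetween f s e a o → o ∈ A ∨ o = u ∨ o = v :=
    fun _ _ _ => mem_or_eq_of_between hnoedge
  have hux : ∀ e o, MGBetween f s e u o → o ∉ A → e = eux := fun e o h ho =>
    h.eq_of_card_inc_eq_succ (hreg u) hdegu ho heux hxA
  have hvy : ∀ e o, MGBetween f s e v o → o ∉ A → e = evy := fun e o h ho =>
    h.eq_of_card_inc_eq_succ (hreg v) hdegv ho hevy hyA
  have hxy : x ≠ y :=
    ne_of_separationPair hloopless hbi (hreg x) hAedge hux hvy heux hevy ⟨hxA, hxu, hxv⟩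
  have hattA : ∀ e a b, (a ∈ A ∨ a = u ∨ a = v) → ¬(b ∈ A ∨ b = u ∨ b = v) →
      MGBetween f s e a b → a = u ∨ a = v := by
    rintro e a b (ha | ha) hb h
    exacts [absurd (hAedge e a b ha h) hb, ha]
  have hcross := crossing_edge_cases hAedge hux hvy heux hevy
  have hattB : ∀ e a b, (a ∉ A ∧ a ≠ u ∧ a ≠ v) → ¬(b ∉ A ∧ b ≠ u ∧ b ≠ v) →
      MGBetween f s e a b → a = x ∨ a = y :=
    fun _ _ _ ha hb h => (hcross ha hb h).imp And.right And.right
  refine ⟨IsInducedAddEdge.loopless_fourRegular_biconnected ⟨hfA, hnewA⟩ hloopless hreg hbi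
      hattA (.inr (.inl rfl)) (.inr (.inr rfl)) huv ?_ ?_,
    IsInducedAddEdge.loopless_fourRegular_biconnected ⟨hfB, hnewB⟩ hloopless hreg hbi
      hattB ⟨hxA, hxu, hxv⟩ ⟨hyA, hyu, hyv⟩ hxy ?_ ?_⟩
  · exact ⟨eux, ⟨x, by tauto, heux⟩, fun e ⟨o, ho, h⟩ => hux e o h fun h' => ho (.inl h')⟩
  · exact ⟨evy, ⟨y, by tauto, hevy⟩, fun e ⟨o, ho, h⟩ => hvy e o h fun h' => ho (.inl h')⟩
  · exact ⟨eux, ⟨u, by tauto, heux.symm⟩, fun e ⟨o, ho, h⟩ =>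
      (hcross ⟨hxA, hxu, hxv⟩ ho h).elim And.left fun h' => absurd h'.2 hxy⟩
  · exact ⟨evy, ⟨v, by tauto, hevy.symm⟩, fun e ⟨o, ho, h⟩ =>
      (hcross ⟨hyA, hyu, hyv⟩ ho h).elim (fun h' => absurd h'.2.symm hxy) And.left⟩

/-- Let `G` be a biconnected loopless 4-regular multigraph with a separation
pair `u, v` inducing a component `A` into which both `u` and `v` send exactly three edges.
Then the graph `A'` obtained from the subgraph induced on `A ∪ {u, v}` by adding one new edge
between `u` and `v` is a biconnected 4-regular multigraph, and the graph `B'` obtained from the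
rest of `G` by deleting `u` and `v` and joining their unique neighbors `x`, `y` outside `A` by a
new edge is also a biconnected loopless 4-regular multigraph. -/
theorem stmt_12 {V E : Type} [Finite V] [Finite E] (f s : E → V)
    (hloopless : MGLoopless f s) (hreg : MGFourRegular f s) (hbi : MGBiconnected f s)
    (u v : V) (huv : u ≠ v) (A : Set V) (hAu : u ∉ A) (hAv : v ∉ A) (hAne : A.Nonempty)
    -- `A` is a connected component of `G - {u, v}` and the rest is nonempty and connected:
    (hAconn : ∀ a ∈ A, ∀ a' ∈ A, MGReachAvoiding2 f s u v a a')
    (hBne : ∃ w : V, w ≠ u ∧ w ≠ v ∧ w ∉ A)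
    (hBconn : ∀ w, w ≠ u → w ≠ v → w ∉ A → ∀ w', w' ≠ u → w' ≠ v → w' ∉ A →
      MGReachAvoiding2 f s u v w w')
    (hnoedge : ∀ e : E, ¬ (f e ∈ A ∧ s e ∉ A ∧ s e ≠ u ∧ s e ≠ v) ∧
      ¬ (s e ∈ A ∧ f e ∉ A ∧ f e ≠ u ∧ f e ≠ v))
    -- `u` and `v` each send exactly three edges into `A`:
    (hdegu : Nat.card {e : E // ∃ a ∈ A, MGBetween f s e u a} = 3)
    (hdegv : Nat.card {e : E // ∃ a ∈ A, MGBetween f s e v a} = 3)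
    -- `x` and `y` are the respective fourth neighbors of `u` and `v`, outside `A ∪ {u, v}`:
    (x y : V) (hx : x ≠ u ∧ x ≠ v ∧ x ∉ A ∧ ∃ e, MGBetween f s e u x)
    (hy : y ≠ u ∧ y ≠ v ∧ y ∉ A ∧ ∃ e, MGBetween f s e v y)
    -- the multigraph `A'`:
    (fA sA : ({e : E // (f e ∈ A ∨ f e = u ∨ f e = v) ∧ (s e ∈ A ∨ s e = u ∨ s e = v)} ⊕ Unit) →
      {w : V // w ∈ A ∨ w = u ∨ w = v})
    (hfA : ∀ e, (fA (Sum.inl e) : V) = f e.val ∧ (sA (Sum.inl e) : V) = s e.val)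
    (hnewA : (fA (Sum.inr ()) : V) = u ∧ (sA (Sum.inr ()) : V) = v)
    -- the multigraph `B'`:
    (fB sB : ({e : E // (f e ∉ A ∧ f e ≠ u ∧ f e ≠ v) ∧ (s e ∉ A ∧ s e ≠ u ∧ s e ≠ v)} ⊕ Unit) →
      {w : V // w ∉ A ∧ w ≠ u ∧ w ≠ v})
    (hfB : ∀ e, (fB (Sum.inl e) : V) = f e.val ∧ (sB (Sum.inl e) : V) = s e.val)
    (hnewB : (fB (Sum.inr ()) : V) = x ∧ (sB (Sum.inr ()) : V) = y) :
    (MGLoopless fA sA ∧ MGFourRegular fA sA ∧ MGBiconnected fA sA) ∧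
    (MGLoopless fB sB ∧ MGFourRegular fB sB ∧ MGBiconnected fB sB) :=
  stmt_12_general f s hloopless hreg hbi u v huv A hnoedge hdegu hdegv x y hx hy fA sA hfA hnewA fB
    sB hfB hnewB
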